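/- arXiv:1204.0620 — 6 statements merged into one kernel-verified Lean document; each statement's English description precedes it below -/
import Mathlib

section
/- Let S be a positive contraction on a Hilbert space H' and X = √(S(I−S)). Then ran(X) + ran(I−S) = ran((I−S)^{1/2}). -/
/-!
Put `C = (I - S)^{1/2}`. Since `S` and `I - S` commute, `X = C S^{1/2}` and `I - S = C C`, so both
ranges on the left lie in `ran C`. Conversely `C = X S^{1/2} + (I - S) C`, the operator form of
`√(x(1-x)) √x + (1-x) √(1-x) = √(1-x)`, so `ran C ⊆ ran X + ran (I - S)`.
-/

theorem LinearMap.range_sup_range_eq_of_eq_comp {R M M₁ M₂ M₃ : Type*} [Semiring R]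
    [AddCommMonoid M] [AddCommMonoid M₁] [AddCommMonoid M₂] [AddCommMonoid M₃]
    [Module R M] [Module R M₁] [Module R M₂] [Module R M₃]
    {X : M₁ →ₗ[R] M} {B : M₂ →ₗ[R] M} {C : M₃ →ₗ[R] M}
    {F : M₁ →ₗ[R] M₃} {G : M₂ →ₗ[R] M₃} {D : M₃ →ₗ[R] M₁} {E : M₃ →ₗ[R] M₂}
    (hX : X = C ∘ₗ F) (hB : B = C ∘ₗ G) (hC : C = X ∘ₗ D + B ∘ₗ E) :
    range X ⊔ range B = range C := by
  refine le_antisymm (sup_le ?_ ?_) ?_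
  · exact hX ▸ range_comp_le_range F C
  · exact hB ▸ range_comp_le_range G C
  · calc range C ≤ range (X ∘ₗ D) ⊔ range (B ∘ₗ E) := hC ▸ range_add_le _ _
      _ ≤ range X ⊔ range B := sup_le_sup (range_comp_le_range D X) (range_comp_le_range E B)

namespace CFC

variable {A : Type*} [PartialOrder A] [NonUnitalRing A] [TopologicalSpace A] [StarRing A]
  [Module ℝ A] [SMulCommClass ℝ A A] [IsScalarTower ℝ A A] [StarOrderedRing A]
  [NonUnitalContinuousFunctionalCalculus ℝ A IsSelfAdjoint] [NonnegSpectrumClass ℝ A]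
  [IsTopologicalRing A] [T2Space A]

theorem _root_.Commute.sqrt_sqrt {a b : A} (h : Commute a b) : Commute (sqrt a) (sqrt b) :=
  ((h.cfcₙ_nnreal _).symm.cfcₙ_nnreal _).symm

theorem sqrt_mul_of_commute {a b : A} (h : Commute a b) (ha : 0 ≤ a) (hb : 0 ≤ b) :
    sqrt (a * b) = sqrt a * sqrt b := by
  have hab := h.sqrt_sqrt
  refine sqrt_unique ?_ (hab.mul_nonneg (sqrt_nonneg a) (sqrt_nonneg b))
  rw [hab.symm.mul_mul_mul_comm, sqrt_mul_sqrt_self a, sqrt_mul_sqrt_self b]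

theorem sqrt_mul_mul_sqrt_add_mul_sqrt {a b : A} (h : Commute a b) (ha : 0 ≤ a) (hb : 0 ≤ b) :
    sqrt (a * b) * sqrt a + b * sqrt b = (a + b) * sqrt b := by
  rw [sqrt_mul_of_commute h ha hb, mul_assoc, ← h.sqrt_sqrt.eq, ← mul_assoc,
    sqrt_mul_sqrt_self a, add_mul]

end CFC

/-- If `S` is a positive contraction on a Hilbert space and `X = √(S(I-S))`, then
`ran X + ran (I - S) = ran ((I-S)^{1/2})` (as linear subspaces, sums of ranges being
the supremum of the range submodules). -/
theorem range_sqrt_add_range_one_sub {H : Type*} [NormedAddCommGroup H]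
    [InnerProductSpace ℂ H] [CompleteSpace H] (S : H →L[ℂ] H)
    (hS : 0 ≤ S) (hS1 : S ≤ 1) :
    LinearMap.range (CFC.sqrt (S * (1 - S))).toLinearMap
        ⊔ LinearMap.range (1 - S).toLinearMap
      = LinearMap.range (CFC.sqrt (1 - S)).toLinearMap := by
  have h1S : 0 ≤ 1 - S := sub_nonneg.mpr hS1
  have hcomm : Commute S (1 - S) := (Commute.one_right S).sub_right (Commute.refl S)
  set C := CFC.sqrt (1 - S)
  have hX : CFC.sqrt (S * (1 - S)) = C * CFC.sqrt S := by
    rw [CFC.sqrt_mul_of_commute hcomm hS h1S, hcomm.sqrt_sqrt.eq]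
  have hB : 1 - S = C * C := (CFC.sqrt_mul_sqrt_self _ h1S).symm
  have hC : C = CFC.sqrt (S * (1 - S)) * CFC.sqrt S + (1 - S) * C := by
    rw [CFC.sqrt_mul_mul_sqrt_add_mul_sqrt hcomm hS h1S, add_sub_cancel, one_mul]
  exact LinearMap.range_sup_range_eq_of_eq_comp (congrArg _ hX) (congrArg _ hB) (congrArg _ hC)
end

section
/- Let P and Q be orthogonal projections on a Hilbert space H such that the sum of their ranges 𝒫 + 𝒬 is closed. Then the orthogonal projection R onto 𝒫 + 𝒬 belongs to the C*-algebra generated by P, Q and the identity operator. -/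
/-!
Write `T = P + Q`. Because `𝒫 + 𝒬` is closed, the open mapping theorem makes `T` coercive there:
`c ‖v‖² ≤ ‖P v‖² + ‖Q v‖² = re ⟪T v, v⟫` for `v ∈ 𝒫 + 𝒬 = ran R`. Since `R T = T R = T`, for `ε > 0`
we get `R - T (T + ε)⁻¹ = ε R (T + ε)⁻¹`, and coercivity bounds `‖R (T + ε)⁻¹‖ ≤ c⁻¹`; hence
`T (T + ε)⁻¹ → R`. Each `T (T + ε)⁻¹` lies in the C*-algebra, which is closed under inverses by
spectral permanence.
-/

open ContinuousLinearMap RCLike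
open scoped InnerProductSpace

theorem ContinuousLinearMap.exists_preimage_norm_le_of_isClosed_range {𝕜 E F : Type*}
    [NontriviallyNormedField 𝕜] [NormedAddCommGroup E] [NormedSpace 𝕜 E] [CompleteSpace E]
    [NormedAddCommGroup F] [NormedSpace 𝕜 F] [CompleteSpace F] (f : E →L[𝕜] F)
    (hf : IsClosed (f.range : Set F)) :
    ∃ C > 0, ∀ y ∈ f.range, ∃ x, f x = y ∧ ‖x‖ ≤ C * ‖y‖ := by
  have : CompleteSpace f.range := hf.completeSpace_coe
  obtain ⟨C, hC, h⟩ := f.rangeRestrict.exists_preimage_norm_le f.surjective_rangeRestrict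
  refine ⟨C, hC, fun y hy => ?_⟩
  obtain ⟨x, hx, hxy⟩ := h ⟨y, hy⟩
  exact ⟨x, congrArg Subtype.val hx, hxy⟩

theorem ContinuousLinearMap.IsIdempotentElem.mul_eq_right_of_range_le {S M : Type*} [Semiring S]
    [TopologicalSpace M] [AddCommMonoid M] [Module S M] {p f : M →L[S] M}
    (hp : IsIdempotentElem p) (h : f.range ≤ p.range) : p * f = f :=
  coe_inj.1 ((LinearMap.IsIdempotentElem.comp_eq_right_iff hp.toLinearMap f.toLinearMap).2 h)

section InnerProductSpace

variable {𝕜 H : Type*} [RCLike 𝕜] [NormedAddCommGroup H] [InnerProductSpace 𝕜 H] [CompleteSpace H]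

theorem IsStarProjection.re_inner_apply_self {P : H →L[𝕜] H} (hP : IsStarProjection P) (x : H) :
    re ⟪P x, x⟫_𝕜 = ‖P x‖ ^ 2 := by
  have h : ⟪P (P x), x⟫_𝕜 = ⟪P x, P x⟫_𝕜 := hP.isSelfAdjoint.isSymmetric (P x) x
  rw [← mul_apply_eq_comp, hP.isIdempotentElem.eq] at h
  rw [h, inner_self_eq_norm_sq]

theorem exists_pos_mul_norm_le_of_isClosed_sup {P Q : H →L[𝕜] H} (hP : IsSelfAdjoint P)
    (hQ : IsSelfAdjoint Q) (hclosed : IsClosed ((P.range ⊔ Q.range : Submodule 𝕜 H) : Set H)) :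
    ∃ c > 0, ∀ x ∈ P.range ⊔ Q.range, c * ‖x‖ ≤ ‖P x‖ + ‖Q x‖ := by
  have hrange : (P.coprod Q).range = P.range ⊔ Q.range := LinearMap.range_coprod _ _
  obtain ⟨C, hC, hpre⟩ :=
    (P.coprod Q).exists_preimage_norm_le_of_isClosed_range (hrange ▸ hclosed)
  refine ⟨C⁻¹, inv_pos.2 hC, fun x hx => ?_⟩
  obtain ⟨⟨a, b⟩, hab, hnorm⟩ := hpre x (hrange ▸ hx)
  simp only [coprod_apply] at hab
  have ha : ‖a‖ ≤ C * ‖x‖ := (_root_.norm_fst_le (a, b)).trans hnorm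
  have hb : ‖b‖ ≤ C * ‖x‖ := (_root_.norm_snd_le (a, b)).trans hnorm
  have hsq : ‖x‖ ^ 2 ≤ (‖P x‖ + ‖Q x‖) * (C * ‖x‖) :=
    calc ‖x‖ ^ 2 = re ⟪P x, a⟫_𝕜 + re ⟪Q x, b⟫_𝕜 := by
          have hPa : ⟪P x, a⟫_𝕜 = ⟪x, P a⟫_𝕜 := hP.isSymmetric x a
          have hQb : ⟪Q x, b⟫_𝕜 = ⟪x, Q b⟫_𝕜 := hQ.isSymmetric x b
          rw [hPa, hQb, ← map_add, ← inner_add_right, hab, inner_self_eq_norm_sq]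
      _ ≤ ‖P x‖ * ‖a‖ + ‖Q x‖ * ‖b‖ := add_le_add (re_inner_le_norm _ _) (re_inner_le_norm _ _)
      _ ≤ (‖P x‖ + ‖Q x‖) * (C * ‖x‖) := by
          rw [add_mul]; gcongr
  rw [inv_mul_le_iff₀ hC]
  rcases (norm_nonneg x).eq_or_lt with h0 | h0
  · rw [← h0]; positivity
  · nlinarith

theorem IsStarProjection.exists_pos_mul_norm_sq_le_re_inner_add {P Q : H →L[𝕜] H}
    (hP : IsStarProjection P) (hQ : IsStarProjection Q)
    (hclosed : IsClosed ((P.range ⊔ Q.range : Submodule 𝕜 H) : Set H)) :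
    ∃ c > 0, ∀ x ∈ P.range ⊔ Q.range, c * ‖x‖ ^ 2 ≤ re ⟪(P + Q) x, x⟫_𝕜 := by
  obtain ⟨c, hc, hbound⟩ :=
    exists_pos_mul_norm_le_of_isClosed_sup hP.isSelfAdjoint hQ.isSelfAdjoint hclosed
  refine ⟨c ^ 2 / 2, by positivity, fun x hx => ?_⟩
  rw [add_apply, inner_add_left, map_add, hP.re_inner_apply_self, hQ.re_inner_apply_self]
  have := pow_le_pow_left₀ (by positivity) (hbound x hx) 2
  nlinarith [sq_nonneg (‖P x‖ - ‖Q x‖)]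

end InnerProductSpace

theorem StarSubalgebra.ringInverse_mem {A : Type*} [CStarAlgebra A] (S : StarSubalgebra ℂ A)
    [IsClosed (S : Set A)] {a : A} (ha : a ∈ S) (hu : IsUnit a) : Ring.inverse a ∈ S := by
  obtain ⟨u, hu⟩ := (S.coe_isUnit (a := ⟨a, ha⟩)).mp hu
  have ha' : a = (Units.map (S.subtype : S →* A) u : A) := by simp [hu]
  rw [ha', Ring.inverse_unit, Units.coe_map_inv]
  exact SetLike.coe_mem _

section Hilbert

variable {H : Type*} [NormedAddCommGroup H] [InnerProductSpace ℂ H] [CompleteSpace H]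

theorem norm_mul_ringInverse_le_of_coercive {R e : H →L[ℂ] H} (hR : IsStarProjection R)
    (he : IsUnit e) (hRe : Commute R e) {c : ℝ} (hc : 0 < c)
    (hcoer : ∀ v ∈ R.range, c * ‖v‖ ^ 2 ≤ re ⟪e v, v⟫_ℂ) :
    ‖R * Ring.inverse e‖ ≤ c⁻¹ := by
  refine opNorm_le_bound _ (inv_nonneg.2 hc.le) fun x => ?_
  set v := R (Ring.inverse e x)
  have hRv : R v = v := by
    simp only [v, ← mul_apply_eq_comp, ← mul_assoc, hR.isIdempotentElem.eq]
  have hev : e v = R x := by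
    simp only [v, ← mul_apply_eq_comp, ← mul_assoc, ← hRe.eq, mul_assoc R,
      Ring.mul_inverse_cancel e he, mul_one]
  have hsq : c * ‖v‖ ^ 2 ≤ ‖x‖ * ‖v‖ :=
    calc c * ‖v‖ ^ 2 ≤ re ⟪e v, v⟫_ℂ := hcoer v ⟨_, rfl⟩
      _ = re ⟪x, v⟫_ℂ := by
          rw [hev]; congr 1
          exact (hR.isSelfAdjoint.isSymmetric x v).trans (congrArg _ hRv)
      _ ≤ ‖x‖ * ‖v‖ := re_inner_le_norm _ _
  rw [mul_apply_eq_comp, inv_mul_eq_div, le_div_iff₀ hc]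
  rcases (norm_nonneg v).eq_or_lt with h0 | h0
  · rw [← h0, zero_mul]; positivity
  · nlinarith

theorem norm_sub_mul_ringInverse_add_le {R T : H →L[ℂ] H} (hR : IsStarProjection R) (hT : 0 ≤ T)
    (hRT : R * T = T) {c : ℝ} (hc : 0 < c)
    (hcoer : ∀ v ∈ R.range, c * ‖v‖ ^ 2 ≤ re ⟪T v, v⟫_ℂ) {ε : ℝ} (hε : 0 < ε) :
    ‖R - T * Ring.inverse (T + algebraMap ℝ _ ε)‖ ≤ ε / c := by
  set e := T + algebraMap ℝ (H →L[ℂ] H) ε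
  have he : IsUnit e :=
    (IsStrictlyPositive.nonneg_add hT (isStrictlyPositive_algebraMap hε)).isUnit
  have hTR : T * R = T := by
    simpa [hR.isSelfAdjoint.star_eq, hT.isSelfAdjoint.star_eq] using congrArg star hRT
  have hRe : Commute R e := by
    simp only [Commute, SemiconjBy, e, mul_add, add_mul, hRT, hTR, Algebra.commutes]
  have hcoer_e : ∀ v ∈ R.range, c * ‖v‖ ^ 2 ≤ re ⟪e v, v⟫_ℂ := fun v hv => by
    have : 0 ≤ ε * ‖v‖ ^ 2 := by positivity
    simpa [e, inner_add_left, inner_smul_left, inner_self_eq_norm_sq_to_K, ← Complex.ofReal_pow]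
      using (hcoer v hv).trans (le_add_of_nonneg_right this)
  have hdiff : R - T * Ring.inverse e = ε • (R * Ring.inverse e) :=
    calc R - T * Ring.inverse e = (R * e - T) * Ring.inverse e := by
          rw [sub_mul, mul_assoc, Ring.mul_inverse_cancel _ he, mul_one]
      _ = ε • (R * Ring.inverse e) := by
          rw [mul_add, hRT, add_sub_cancel_left, ← Algebra.commutes, mul_assoc, Algebra.smul_def]
  rw [hdiff, norm_smul, Real.norm_of_nonneg hε.le, div_eq_mul_inv]
  exact mul_le_mul_of_nonneg_left (norm_mul_ringInverse_le_of_coercive hR he hRe hc hcoer_e) hε.le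

theorem StarSubalgebra.mem_of_isStarProjection_of_coercive (S : StarSubalgebra ℂ (H →L[ℂ] H))
    [hS : IsClosed (S : Set (H →L[ℂ] H))] {R T : H →L[ℂ] H} (hTS : T ∈ S) (hT : 0 ≤ T)
    (hR : IsStarProjection R) (hRT : R * T = T) {c : ℝ} (hc : 0 < c)
    (hcoer : ∀ v ∈ R.range, c * ‖v‖ ^ 2 ≤ re ⟪T v, v⟫_ℂ) : R ∈ S := by
  refine hS.closure_subset (Metric.mem_closure_iff.2 fun δ hδ => ?_)
  set ε := c * δ / 2
  have hε : 0 < ε := by positivity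
  have heS : T + algebraMap ℝ _ ε ∈ S := by
    rw [IsScalarTower.algebraMap_apply ℝ ℂ]
    exact add_mem hTS (S.algebraMap_mem _)
  have he : IsUnit (T + algebraMap ℝ (H →L[ℂ] H) ε) :=
    (IsStrictlyPositive.nonneg_add hT (isStrictlyPositive_algebraMap hε)).isUnit
  refine ⟨_, mul_mem hTS (S.ringInverse_mem heS he), ?_⟩
  rw [dist_eq_norm]
  calc _ ≤ ε / c := norm_sub_mul_ringInverse_add_le hR hT hRT hc hcoer hε
    _ < δ := by rw [div_lt_iff₀ hc]; simp only [ε]; linarith [mul_pos hc hδ]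

end Hilbert

/-- If `P`, `Q` are orthogonal projections on a Hilbert space whose ranges have closed sum,
then the orthogonal projection `R` onto `ran P + ran Q` belongs to the C*-algebra generated
by `P`, `Q` and the identity (the closure of the star-subalgebra generated by `P` and `Q`). -/
theorem projection_onto_sum_mem_CstarAlgebra {H : Type*} [NormedAddCommGroup H]
    [InnerProductSpace ℂ H] [CompleteSpace H] (P Q R : H →L[ℂ] H)
    (hPsa : IsSelfAdjoint P) (hP2 : P * P = P)
    (hQsa : IsSelfAdjoint Q) (hQ2 : Q * Q = Q)
    (hclosed : IsClosed ((LinearMap.range P.toLinearMap ⊔ LinearMap.range Q.toLinearMap :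
        Submodule ℂ H) : Set H))
    (hRsa : IsSelfAdjoint R) (hR2 : R * R = R)
    (hRrange : LinearMap.range R.toLinearMap
      = LinearMap.range P.toLinearMap ⊔ LinearMap.range Q.toLinearMap) :
    R ∈ (StarAlgebra.adjoin ℂ {P, Q} :
      StarSubalgebra ℂ (H →L[ℂ] H)).topologicalClosure := by
  have hP : IsStarProjection P := ⟨hP2, hPsa⟩
  have hQ : IsStarProjection Q := ⟨hQ2, hQsa⟩
  have hR : IsStarProjection R := ⟨hR2, hRsa⟩
  have := (StarAlgebra.adjoin ℂ {P, Q}).isClosed_topologicalClosure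
  have hmem : ∀ X ∈ ({P, Q} : Set (H →L[ℂ] H)),
      X ∈ (StarAlgebra.adjoin ℂ {P, Q}).topologicalClosure :=
    fun X hX => StarSubalgebra.le_topologicalClosure _ (StarAlgebra.subset_adjoin ℂ _ hX)
  have hRT : R * (P + Q) = P + Q :=
    IsIdempotentElem.mul_eq_right_of_range_le hR.isIdempotentElem
      (hRrange ▸ LinearMap.range_add_le _ _)
  obtain ⟨c, hc, hcoer⟩ := hP.exists_pos_mul_norm_sq_le_re_inner_add hQ hclosed
  exact StarSubalgebra.mem_of_isStarProjection_of_coercive _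
    (add_mem (hmem P (by simp)) (hmem Q (by simp))) (add_nonneg hP.nonneg hQ.nonneg) hR hRT hc
    (hRrange ▸ hcoer)
end

section
/- Let P and Q be orthogonal projections on a Hilbert space H with 𝒫 + 𝒬 closed, where 𝒫 = ran(P) and 𝒬 = ran(Q). If R is the orthogonal projection onto 𝒫 + 𝒬, then there exists 0 < ε < 1 with [ε, 1] ∩ σ(P + (I−P)Q(I−P)) open and closed in σ(P + (I−P)Q(I−P)), and R equals the spectral projection of P + (I−P)Q(I−P) associated with [ε, 1]. -/
/-!
Write `T = P + (1 - P) Q (1 - P)`. Then `re ⟪T x, x⟫ = ‖P x‖² + ‖Q (1 - P) x‖²`, so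
`ker T = (ran P + ran Q)ᗮ = ker R`. The range `(ran P + ran Q) ⊓ (ran P)ᗮ` of `(1 - P) Q` is
closed, so by the open mapping theorem its adjoint `Q (1 - P)` is bounded below on it; this
makes `T` coercive on `ran R`. Hence `T + (1 - R)` has spectrum in `[c, 1]` for some `c > 0`,
and `T = (T + (1 - R)) R` has spectrum in `{0} ∪ [c, 1]`. On such a spectrum the indicator of
`[ε, 1]` (`ε < c`) agrees with `x ↦ x x⁻¹`, whose functional calculus is a projection with the
same kernel as `T`, hence equal to `R`.
-/

open ContinuousLinearMap Set Submodule RCLike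
open scoped InnerProductSpace

theorem spectrum_mul_subset_insert_zero {R A : Type*} [Field R] [Ring A] [Algebra R A] {a e : A}
    (he : IsIdempotentElem e) (hae : Commute a e) :
    spectrum R (a * e) ⊆ insert 0 (spectrum R a) := by
  intro r hr
  by_contra h
  rw [mem_insert_iff, not_or] at h
  obtain ⟨hr0, hra⟩ := h
  set x := algebraMap R A r
  have hx : ∀ y, Commute x y := Algebra.commute_algebraMap_left r
  have hae' : Commute a (1 - e) := (Commute.one_right a).sub_right hae
  -- `r - a e` is a factor of the unit `r (r - a)`, and the cofactor commutes with it
  have hprod : (x - a * e) * (x - a * (1 - e)) = x * (x - a) := by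
    have hzero : a * e * (a * (1 - e)) = 0 := by
      rw [mul_assoc, ← mul_assoc e, ← hae.eq, mul_assoc, he.mul_one_sub_self, mul_zero, mul_zero]
    calc (x - a * e) * (x - a * (1 - e))
        = x * x - x * (a * (1 - e)) - a * e * x + a * e * (a * (1 - e)) := by noncomm_ring
      _ = x * (x - a) := by rw [← (hx (a * e)).eq, hzero]; noncomm_ring
  have hcomm : Commute (x - a * e) (x - a * (1 - e)) :=
    (hx _).sub_left <| (hx _).symm.sub_right <|
      ((Commute.refl a).mul_right hae').mul_left
        (hae.symm.mul_right ((Commute.one_right e).sub_right (Commute.refl e)))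
  have hunit : IsUnit (x * (x - a)) :=
    ((IsUnit.mk0 r hr0).map (algebraMap R A)).mul (spectrum.notMem_iff.mp hra)
  exact spectrum.mem_iff.mp hr ((hcomm.isUnit_mul_iff.mp (hprod ▸ hunit)).1)

theorem continuousOn_inv_of_subset_insert_zero {s : Set ℝ} {c : ℝ} (hc : 0 < c)
    (hs : s ⊆ insert 0 (Ici c)) : ContinuousOn (·⁻¹) s := by
  refine ContinuousOn.mono ?_ hs
  rw [insert_eq]
  exact continuousOn_singleton _ _ |>.union_of_isClosed
    (continuousOn_inv₀.mono fun x hx ↦ (hc.trans_le hx).ne') isClosed_singleton isClosed_Ici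

theorem mem_Icc_iff_ne_zero_of_mem_insert {x c ε : ℝ} (hx : x ∈ insert 0 (Icc c 1)) (hε : 0 < ε)
    (hεc : ε ≤ c) : x ∈ Icc ε 1 ↔ x ≠ 0 := by
  rcases hx with rfl | ⟨hcx, hx1⟩
  · simp [hε.not_ge]
  · exact ⟨fun _ ↦ (hε.trans_le (hεc.trans hcx)).ne', fun _ ↦ ⟨hεc.trans hcx, hx1⟩⟩

theorem exists_pos_mul_norm_le_norm_adjoint_apply {𝕜 E F : Type*} [RCLike 𝕜]
    [NormedAddCommGroup E] [InnerProductSpace 𝕜 E] [CompleteSpace E]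
    [NormedAddCommGroup F] [InnerProductSpace 𝕜 F] [CompleteSpace F]
    (B : E →L[𝕜] F) (hB : IsClosed (B.range : Set F)) :
    ∃ c > 0, ∀ y ∈ B.range, c * ‖y‖ ≤ ‖adjoint B y‖ := by
  have : CompleteSpace B.range := hB.completeSpace_coe
  obtain ⟨C, hC, hpre⟩ :=
    B.rangeRestrict.exists_preimage_norm_le (LinearMap.surjective_rangeRestrict _)
  refine ⟨C⁻¹, inv_pos.mpr hC, fun y hy ↦ ?_⟩
  obtain ⟨x, hx, hxC⟩ := hpre ⟨y, hy⟩
  replace hx : B x = y := congrArg Subtype.val hx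
  replace hxC : ‖x‖ ≤ C * ‖y‖ := hxC
  have key : ‖y‖ * ‖y‖ ≤ ‖y‖ * (C * ‖adjoint B y‖) :=
    calc ‖y‖ * ‖y‖ = re ⟪x, adjoint B y⟫_𝕜 := by
          rw [adjoint_inner_right, hx, inner_self_eq_norm_mul_norm]
      _ ≤ ‖x‖ * ‖adjoint B y‖ := (re_le_norm _).trans (norm_inner_le_norm _ _)
      _ ≤ ‖y‖ * (C * ‖adjoint B y‖) := by nlinarith [norm_nonneg (adjoint B y)]
  rcases (norm_nonneg y).eq_or_lt with hy0 | hy0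
  · rw [← hy0, mul_zero]; positivity
  · rw [inv_mul_le_iff₀ hC]
    exact le_of_mul_le_mul_left key hy0

section ComplexHilbertSpace

variable {H : Type*} [NormedAddCommGroup H] [InnerProductSpace ℂ H] [CompleteSpace H]

theorem spectrum_subset_Ici_of_le_re_inner {A : H →L[ℂ] H} {a : ℝ}
    (ha : ∀ x, a * ‖x‖ ^ 2 ≤ re ⟪A x, x⟫_ℂ) : spectrum ℝ A ⊆ Ici a := by
  intro r hr
  by_contra hra
  rw [mem_Ici, not_le, ← sub_pos] at hra
  refine spectrum.mem_iff.mp hr ?_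
  rw [← IsUnit.neg_iff, neg_sub]
  refine isUnit_of_forall_le_norm_inner_map _ (Real.toNNReal_pos.mpr hra) fun x ↦ ?_
  calc ‖x‖ ^ 2 * (a - r).toNNReal = a * ‖x‖ ^ 2 - r * ‖x‖ ^ 2 := by
        rw [Real.coe_toNNReal _ hra.le]; ring
    _ ≤ re ⟪A x, x⟫_ℂ - r * ‖x‖ ^ 2 := by linarith [ha x]
    _ = re ⟪(A - algebraMap ℝ (H →L[ℂ] H) r) x, x⟫_ℂ := by simp [← Complex.ofReal_pow]
    _ ≤ ‖⟪(A - algebraMap ℝ (H →L[ℂ] H) r) x, x⟫_ℂ‖ := re_le_norm _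

theorem spectrum_subset_Icc_of_re_inner {A : H →L[ℂ] H} {a b : ℝ}
    (ha : ∀ x, a * ‖x‖ ^ 2 ≤ re ⟪A x, x⟫_ℂ) (hb : ∀ x, re ⟪A x, x⟫_ℂ ≤ b * ‖x‖ ^ 2) :
    spectrum ℝ A ⊆ Icc a b := by
  have hneg : spectrum ℝ (-A) ⊆ Ici (-b) :=
    spectrum_subset_Ici_of_le_re_inner fun x ↦ by simpa [inner_neg_left] using hb x
  intro r hr
  refine ⟨spectrum_subset_Ici_of_le_re_inner ha hr, ?_⟩
  exact neg_le_neg_iff.mp (hneg (spectrum.neg_eq (R := ℝ) A ▸ neg_mem_neg.mpr hr))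

/-- Since `0⁻¹ = 0`, `x ↦ x * x⁻¹` is the indicator of `{0}ᶜ`; `hinv` says that `0` is not an
accumulation point of the spectrum, which makes `cfc (·⁻¹) T` a generalized inverse of `T`. -/
theorem eq_cfc_mul_inv_of_ker_eq {T R : H →L[ℂ] H} (hT : IsSelfAdjoint T)
    (hR : IsStarProjection R) (hinv : ContinuousOn (·⁻¹) (spectrum ℝ T))
    (hker : ∀ x, T x = 0 ↔ R x = 0) : R = cfc (fun x : ℝ ↦ x * x⁻¹) T := by
  set S := cfc (fun x : ℝ ↦ x * x⁻¹) T
  set G := cfc (·⁻¹ : ℝ → ℝ) T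
  have hSG : S = G * T :=
    calc S = cfc (fun x : ℝ ↦ x⁻¹ * x) T := cfc_congr fun x _ ↦ mul_comm _ _
      _ = G * T := by rw [cfc_mul _ _ T hinv, cfc_id' ℝ T]
  have hTS : T * S = T :=
    calc T * S = cfc (fun x : ℝ ↦ x * (x * x⁻¹)) T := by rw [cfc_mul _ _ T, cfc_id' ℝ T]
      _ = T := (cfc_congr fun x _ ↦ by rw [← mul_assoc, mul_self_mul_inv]).trans (cfc_id' ℝ T)
  have hRR : ∀ y, R (R y) = R y := fun y ↦ by simpa using congr($(hR.isIdempotentElem.eq) y)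
  have hTR : T * R = T := by
    ext x
    have : T (x - R x) = 0 := (hker _).mpr (by rw [map_sub, hRR, sub_self])
    rw [map_sub, sub_eq_zero] at this
    exact this.symm
  have hRS : R * S = R := by
    ext x
    have : R (x - S x) = 0 := (hker _).mp (by rw [map_sub, ← mul_apply_eq_comp, hTS, sub_self])
    rw [map_sub, sub_eq_zero] at this
    exact this.symm
  have hSR : S * R = S := by rw [hSG, mul_assoc, hTR]
  have hS : IsSelfAdjoint S := cfc_predicate _ T
  calc R = star (R * S) := by rw [hRS, hR.isSelfAdjoint.star_eq]
    _ = S := by rw [star_mul, hS.star_eq, hR.isSelfAdjoint.star_eq, hSR]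

end ComplexHilbertSpace

section CompressedSum

variable {𝕜 E : Type*} [RCLike 𝕜] [NormedAddCommGroup E] [InnerProductSpace 𝕜 E]
variable (K L : Submodule 𝕜 E) [K.HasOrthogonalProjection] [L.HasOrthogonalProjection]

noncomputable def compressedSum : E →L[𝕜] E :=
  K.starProjection + (1 - K.starProjection) * L.starProjection * (1 - K.starProjection)

theorem compressedSum_apply (x : E) :
    compressedSum K L x =
      K.starProjection x + Kᗮ.starProjection (L.starProjection (Kᗮ.starProjection x)) := by
  simp [compressedSum, starProjection_orthogonal']

theorem re_inner_compressedSum_apply_self (x : E) :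
    re ⟪compressedSum K L x, x⟫_𝕜
      = ‖K.starProjection x‖ ^ 2 + ‖L.starProjection (Kᗮ.starProjection x)‖ ^ 2 := by
  rw [compressedSum_apply, inner_add_left, inner_starProjection_left_eq_right Kᗮ, map_add,
    re_inner_starProjection_eq_normSq, re_inner_starProjection_eq_normSq]
  simp

theorem re_inner_compressedSum_apply_self_le (x : E) :
    re ⟪compressedSum K L x, x⟫_𝕜 ≤ ‖x‖ ^ 2 := by
  rw [re_inner_compressedSum_apply_self, norm_sq_eq_add_norm_sq_starProjection x K]
  gcongr
  exact norm_starProjection_apply_le _ _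

theorem compressedSum_apply_eq_zero_iff {x : E} : compressedSum K L x = 0 ↔ x ∈ (K ⊔ L)ᗮ := by
  rw [← inf_orthogonal, mem_inf]
  constructor
  · intro h
    have h0 : ‖K.starProjection x‖ ^ 2 + ‖L.starProjection (Kᗮ.starProjection x)‖ ^ 2 = 0 := by
      rw [← re_inner_compressedSum_apply_self, h, inner_zero_left, map_zero]
    obtain ⟨hK, hL⟩ := (add_eq_zero_iff_of_nonneg (sq_nonneg _) (sq_nonneg _)).mp h0
    have hxK : x ∈ Kᗮ := (K.starProjection_apply_eq_zero_iff).mp (by simpa using hK)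
    rw [starProjection_eq_self_iff.mpr hxK] at hL
    exact ⟨hxK, (L.starProjection_apply_eq_zero_iff).mp (by simpa using hL)⟩
  · rintro ⟨hK, hL⟩
    rw [compressedSum_apply, (K.starProjection_apply_eq_zero_iff).mpr hK,
      starProjection_eq_self_iff.mpr hK, (L.starProjection_apply_eq_zero_iff).mpr hL, map_zero,
      add_zero]

theorem compressedSum_mul_starProjection_sup [(K ⊔ L).HasOrthogonalProjection] :
    compressedSum K L * (K ⊔ L).starProjection = compressedSum K L := by
  ext x
  have := (compressedSum_apply_eq_zero_iff K L).mpr ((K ⊔ L).sub_starProjection_mem_orthogonal x)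
  rw [map_sub, sub_eq_zero] at this
  exact this.symm

theorem starProjection_orthogonal_apply_mem_of_le {M : Submodule 𝕜 E} (hKM : K ≤ M) {x : E}
    (hx : x ∈ M) : Kᗮ.starProjection x ∈ M := by
  rw [starProjection_orthogonal', sub_apply, one_apply_eq_self]
  exact sub_mem hx (hKM (starProjection_apply_mem _ _))

theorem range_starProjection_orthogonal_mul_starProjection :
    (Kᗮ.starProjection * L.starProjection).range = (K ⊔ L) ⊓ Kᗮ := by
  apply le_antisymm
  · rintro _ ⟨x, rfl⟩
    exact ⟨starProjection_orthogonal_apply_mem_of_le K le_sup_left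
      (mem_sup_right (starProjection_apply_mem _ _)), starProjection_apply_mem _ _⟩
  · rintro y ⟨hy, hyK⟩
    obtain ⟨a, ha, b, hb, rfl⟩ := mem_sup.mp hy
    refine ⟨b, ?_⟩
    have ha' : Kᗮ.starProjection a = 0 :=
      (Kᗮ.starProjection_apply_eq_zero_iff).mpr (K.le_orthogonal_orthogonal ha)
    calc Kᗮ.starProjection (L.starProjection b) = Kᗮ.starProjection (a + b) := by
          rw [starProjection_eq_self_iff.mpr hb, map_add, ha', zero_add]
      _ = a + b := starProjection_eq_self_iff.mpr hyK

variable [CompleteSpace E]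

theorem isSelfAdjoint_compressedSum : IsSelfAdjoint (compressedSum K L) :=
  (isSelfAdjoint_starProjection K).add <| (isSelfAdjoint_starProjection L).conjugate_self
    ((IsSelfAdjoint.one _).sub (isSelfAdjoint_starProjection K))

theorem starProjection_sup_mul_compressedSum [(K ⊔ L).HasOrthogonalProjection] :
    (K ⊔ L).starProjection * compressedSum K L = compressedSum K L := by
  simpa [(isSelfAdjoint_compressedSum K L).star_eq, (isSelfAdjoint_starProjection _).star_eq]
    using congr(star $(compressedSum_mul_starProjection_sup K L))

theorem exists_mul_norm_sq_le_re_inner_compressedSum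
    (hKL : IsClosed ((K ⊔ L : Submodule 𝕜 E) : Set E)) :
    ∃ c > 0, c ≤ 1 ∧ ∀ m ∈ K ⊔ L, c * ‖m‖ ^ 2 ≤ re ⟪compressedSum K L m, m⟫_𝕜 := by
  obtain ⟨c, hc, hB⟩ := exists_pos_mul_norm_le_norm_adjoint_apply
    (Kᗮ.starProjection * L.starProjection) <| by
      rw [range_starProjection_orthogonal_mul_starProjection]
      exact hKL.inter K.isClosed_orthogonal
  refine ⟨min 1 (c ^ 2), by positivity, min_le_left _ _, fun m hm ↦ ?_⟩
  have hy := hB (Kᗮ.starProjection m) <| by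
    rw [range_starProjection_orthogonal_mul_starProjection]
    exact ⟨starProjection_orthogonal_apply_mem_of_le K le_sup_left hm, starProjection_apply_mem _ _⟩
  rw [← star_eq_adjoint, star_mul, (isSelfAdjoint_starProjection _).star_eq,
    (isSelfAdjoint_starProjection _).star_eq, mul_apply_eq_comp,
    starProjection_eq_self_iff.mpr (starProjection_apply_mem _ _)] at hy
  rw [re_inner_compressedSum_apply_self, norm_sq_eq_add_norm_sq_starProjection m K, mul_add]
  gcongr
  · exact mul_le_of_le_one_left (sq_nonneg _) (min_le_left _ _)
  · calc min 1 (c ^ 2) * ‖Kᗮ.starProjection m‖ ^ 2 ≤ (c * ‖Kᗮ.starProjection m‖) ^ 2 := by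
          rw [mul_pow]; gcongr; exact min_le_right _ _
      _ ≤ _ := by gcongr

end CompressedSum

theorem spectrum_compressedSum_subset {H : Type*} [NormedAddCommGroup H] [InnerProductSpace ℂ H]
    [CompleteSpace H] (K L : Submodule ℂ H) [K.HasOrthogonalProjection]
    [L.HasOrthogonalProjection] (hKL : IsClosed ((K ⊔ L : Submodule ℂ H) : Set H)) :
    ∃ c > 0, c ≤ 1 ∧ spectrum ℝ (compressedSum K L) ⊆ insert 0 (Icc c 1) := by
  have : CompleteSpace ↥(K ⊔ L) := hKL.completeSpace_coe
  obtain ⟨c, hc0, hc1, hcoer⟩ := exists_mul_norm_sq_le_re_inner_compressedSum K L hKL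
  set T := compressedSum K L
  set R := (K ⊔ L).starProjection
  have hR : IsIdempotentElem R := isIdempotentElem_starProjection _
  have hTR : T * R = T := compressedSum_mul_starProjection_sup K L
  have hRT : R * T = T := starProjection_sup_mul_compressedSum K L
  have hAR : (T + (1 - R)) * R = T := by
    rw [add_mul, sub_mul, one_mul, hTR, hR.eq, sub_self, add_zero]
  have hRA : R * (T + (1 - R)) = T := by
    rw [mul_add, mul_sub, mul_one, hRT, hR.eq, sub_self, add_zero]
  have hinner : ∀ x, re ⟪(T + (1 - R)) x, x⟫_ℂ
      = re ⟪T (R x), R x⟫_ℂ + ‖(K ⊔ L)ᗮ.starProjection x‖ ^ 2 := by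
    intro x
    have hTx : T x = R (T (R x)) := by rw [← mul_apply_eq_comp, ← mul_apply_eq_comp, hRT, hTR]
    rw [add_apply, inner_add_left, map_add, hTx, inner_starProjection_left_eq_right,
      ← starProjection_orthogonal', re_inner_starProjection_eq_normSq]
    rfl
  refine ⟨c, hc0, hc1, ?_⟩
  rw [← hAR]
  refine (spectrum_mul_subset_insert_zero hR (hRA.trans hAR.symm).symm).trans
    (insert_subset_insert (spectrum_subset_Icc_of_re_inner (fun x ↦ ?_) (fun x ↦ ?_)))
  · rw [hinner, norm_sq_eq_add_norm_sq_starProjection x (K ⊔ L), mul_add]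
    gcongr
    · exact hcoer _ (starProjection_apply_mem _ _)
    · exact mul_le_of_le_one_left (sq_nonneg _) hc1
  · rw [hinner, norm_sq_eq_add_norm_sq_starProjection x (K ⊔ L), one_mul]
    gcongr
    exact re_inner_compressedSum_apply_self_le K L _

/-- If `P`, `Q` are orthogonal projections whose ranges have closed sum and `R` is the
orthogonal projection onto `ran P + ran Q`, then there exists `0 < ε < 1` such that
`[ε,1] ∩ σ(P + (I-P)Q(I-P))` is open and closed in the spectrum of `T = P + (I-P)Q(I-P)`,
and `R` equals the spectral projection of `T` for `[ε, 1]` (the image of the characteristic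
function of `[ε,1]` under the functional calculus). -/
theorem projection_onto_sum_eq_spectral_projection {H : Type*} [NormedAddCommGroup H]
    [InnerProductSpace ℂ H] [CompleteSpace H] (P Q R : H →L[ℂ] H)
    (hPsa : IsSelfAdjoint P) (hP2 : P * P = P)
    (hQsa : IsSelfAdjoint Q) (hQ2 : Q * Q = Q)
    (hclosed : IsClosed ((LinearMap.range P.toLinearMap ⊔ LinearMap.range Q.toLinearMap :
        Submodule ℂ H) : Set H))
    (hRsa : IsSelfAdjoint R) (hR2 : R * R = R)
    (hRrange : LinearMap.range R.toLinearMap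
      = LinearMap.range P.toLinearMap ⊔ LinearMap.range Q.toLinearMap) :
    ∃ ε : ℝ, 0 < ε ∧ ε < 1 ∧
      IsClopen {x : spectrum ℝ (P + (1 - P) * Q * (1 - P)) | (x : ℝ) ∈ Set.Icc ε 1} ∧
      R = cfc (fun x : ℝ => if x ∈ Set.Icc ε 1 then (1 : ℝ) else 0)
        (P + (1 - P) * Q * (1 - P)) := by
  obtain ⟨K, _, rfl⟩ := isStarProjection_iff_eq_starProjection.mp ⟨hP2, hPsa⟩
  obtain ⟨L, _, rfl⟩ := isStarProjection_iff_eq_starProjection.mp ⟨hQ2, hQsa⟩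
  obtain ⟨M, _, rfl⟩ := isStarProjection_iff_eq_starProjection.mp ⟨hR2, hRsa⟩
  simp only [range_starProjection] at hclosed hRrange
  subst hRrange
  obtain ⟨c, hc0, hc1, hσ⟩ := spectrum_compressedSum_subset K L hclosed
  have hε : ∀ x ∈ spectrum ℝ (compressedSum K L), x ∈ Icc (c / 2) 1 ↔ x ≠ 0 := fun x hx ↦
    mem_Icc_iff_ne_zero_of_mem_insert (hσ hx) (half_pos hc0) (half_le_self hc0.le)
  refine ⟨c / 2, half_pos hc0, by linarith, ⟨isClosed_Icc.preimage continuous_subtype_val, ?_⟩, ?_⟩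
  · have hopen : {x : spectrum ℝ (compressedSum K L) | (x : ℝ) ∈ Icc (c / 2) 1}
        = {x : spectrum ℝ (compressedSum K L) | (x : ℝ) ≠ 0} :=
      Set.ext fun x ↦ hε x x.2
    exact hopen ▸ isOpen_ne_fun continuous_subtype_val continuous_const
  · rw [cfc_congr fun x hx ↦ show _ = x * x⁻¹ by split_ifs with h <;> simp_all [hε x hx]]
    exact eq_cfc_mul_inv_of_ker_eq (isSelfAdjoint_compressedSum K L)
      isStarProjection_starProjection
      (continuousOn_inv_of_subset_insert_zero hc0
        (hσ.trans (insert_subset_insert Icc_subset_Ici_self)))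
      fun x ↦ (compressedSum_apply_eq_zero_iff K L).trans (starProjection_apply_eq_zero_iff _).symm
end

section
/- Let 𝒫 and 𝒬 be closed subspaces of a Hilbert space H and let ℛ be a closed subspace contained in 𝒫 ∩ 𝒬. Then 𝒫 + 𝒬 is closed in H if and only if (𝒫/ℛ) + (𝒬/ℛ) is closed in the quotient Hilbert space H/ℛ. -/
theorem Submodule.isClosed_map_mkQ_iff {R M : Type*} [Ring R] [AddCommGroup M] [Module R M]
    [TopologicalSpace M] {S L : Submodule R M} (hSL : S ≤ L) :
    IsClosed (L.map S.mkQ : Set (M ⧸ S)) ↔ IsClosed (L : Set M) := by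
  rw [← S.isQuotientMap_mkQ.isClosed_preimage, ← Submodule.comap_coe, Submodule.comap_map_mkQ,
    sup_eq_right.2 hSL]

theorem sum_closed_iff_quotient_sum_closed_general {H : Type*} [NormedAddCommGroup H]
    [InnerProductSpace ℂ H]
    (Ps Qs Rs : Submodule ℂ H)
    (hle : Rs ≤ Ps ⊓ Qs) :
    IsClosed ((Ps ⊔ Qs : Submodule ℂ H) : Set H) ↔
      IsClosed ((Ps.map Rs.mkQ ⊔ Qs.map Rs.mkQ : Submodule ℂ (H ⧸ Rs)) : Set (H ⧸ Rs)) := by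
  rw [← Submodule.map_sup]
  exact (Submodule.isClosed_map_mkQ_iff (hle.trans (inf_le_left.trans le_sup_left))).symm

/-- Let `Ps` and `Qs` be closed subspaces of a Hilbert space `H` and `Rs` a closed subspace
contained in `Ps ∩ Qs`. Then `Ps + Qs` is closed in `H` if and only if `Ps/Rs + Qs/Rs` is
closed in the quotient space `H/Rs`. -/
theorem sum_closed_iff_quotient_sum_closed {H : Type*} [NormedAddCommGroup H]
    [InnerProductSpace ℂ H] [CompleteSpace H]
    (Ps Qs Rs : Submodule ℂ H)
    (hPs : IsClosed (Ps : Set H)) (hQs : IsClosed (Qs : Set H))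
    (hRs : IsClosed (Rs : Set H)) (hle : Rs ≤ Ps ⊓ Qs) :
    IsClosed ((Ps ⊔ Qs : Submodule ℂ H) : Set H) ↔
      IsClosed ((Ps.map Rs.mkQ ⊔ Qs.map Rs.mkQ : Submodule ℂ (H ⧸ Rs)) : Set (H ⧸ Rs)) :=
  sum_closed_iff_quotient_sum_closed_general Ps Qs Rs hle
end

section
/- Let 𝒫 = closure of span{eₙ ⊕ 0 : n ∈ ℕ} and 𝒬 = closure of span{eₙ ⊕ (1/(n+1)) eₙ : n ∈ ℕ} in ℓ² ⊕ ℓ², where (eₙ) is the standard orthonormal basis of ℓ². Then 𝒫 + 𝒬 is dense in ℓ² ⊕ ℓ² but not closed. -/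
/-! A vector orthogonal to every `eₙ ⊕ 0` and every `eₙ ⊕ (1/(n+1)) eₙ` vanishes, so `𝒫 + 𝒬` is
dense. Every element of `𝒫` has second component `0`, and every `x ⊕ y ∈ 𝒬` satisfies
`yₙ = xₙ / (n+1)`; hence writing `0 ⊕ (1/(n+1))ₙ` as `p + q` with `p ∈ 𝒫`, `q ∈ 𝒬` would force the
first component of `q` to be `(1, 1, 1, …) ∉ ℓ²`. So `𝒫 + 𝒬` is a proper dense subspace, which
cannot be closed. -/

/-- The Hilbert space `ℓ² ⊕ ℓ²` with the direct sum inner product. -/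
noncomputable abbrev L2Sum : Type :=
  WithLp 2 ((lp (fun _ : ℕ => ℂ) 2) × (lp (fun _ : ℕ => ℂ) 2))

/-- `𝒫` is the closed span of `{eₙ ⊕ 0 : n ∈ ℕ}` in `ℓ² ⊕ ℓ²`. -/
noncomputable def Psub : Submodule ℂ L2Sum :=
  (Submodule.span ℂ
    (Set.range fun n : ℕ =>
      (WithLp.equiv 2 _).symm (lp.single 2 n (1 : ℂ), 0))).topologicalClosure

/-- `𝒬` is the closed span of `{eₙ ⊕ (1/(n+1)) eₙ : n ∈ ℕ}` in `ℓ² ⊕ ℓ²`. -/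
noncomputable def Qsub : Submodule ℂ L2Sum :=
  (Submodule.span ℂ
    (Set.range fun n : ℕ =>
      (WithLp.equiv 2 (lp (fun _ : ℕ => ℂ) 2 × lp (fun _ : ℕ => ℂ) 2)).symm
        (lp.single 2 n (1 : ℂ), (1 / (n + 1) : ℂ) • lp.single 2 n (1 : ℂ)))).topologicalClosure

open scoped ENNReal

theorem Submodule.topologicalClosure_span_le_ker {R M N : Type*} [Semiring R]
    [TopologicalSpace M] [AddCommMonoid M] [Module R M] [ContinuousAdd M]
    [ContinuousConstSMul R M] [TopologicalSpace N] [AddCommMonoid N] [Module R N] [T1Space N]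
    {s : Set M} {f : M →L[R] N} (h : ∀ x ∈ s, f x = 0) :
    (Submodule.span R s).topologicalClosure ≤ f.ker :=
  Submodule.topologicalClosure_minimal _ (Submodule.span_le.2 h) f.isClosed_ker

theorem not_memℓp_const {α E : Type*} [Infinite α] [NormedAddCommGroup E] {p : ℝ≥0∞}
    (hp : 0 < p.toReal) {a : E} (ha : a ≠ 0) : ¬ Memℓp (fun _ : α => a) p := by
  rw [memℓp_gen_iff hp, summable_const_iff]
  positivity

theorem memℓp_one_div_nat_add_one : Memℓp (fun n : ℕ => 1 / ((n : ℂ) + 1)) 2 := by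
  rw [memℓp_gen_iff (by norm_num)]
  convert (Real.summable_one_div_nat_add_rpow 1 2).2 one_lt_two using 2 with n
  rw [norm_div, norm_one, ← Nat.cast_add_one, Complex.norm_natCast]
  norm_num [abs_of_nonneg (by positivity : (0 : ℝ) ≤ n + 1)]

local notation "ℓ²" => lp (fun _ : ℕ => ℂ) 2

theorem toLp_single_zero_mem_Psub (n : ℕ) : WithLp.toLp 2 (lp.single 2 n (1 : ℂ), 0) ∈ Psub :=
  Submodule.le_topologicalClosure _ (Submodule.subset_span ⟨n, rfl⟩)

theorem toLp_single_smul_single_mem_Qsub (n : ℕ) :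
    WithLp.toLp 2 (lp.single 2 n (1 : ℂ), (1 / ((n : ℂ) + 1)) • lp.single 2 n (1 : ℂ)) ∈ Qsub :=
  Submodule.le_topologicalClosure _ (Submodule.subset_span ⟨n, rfl⟩)

theorem Psub_le_ker_snd : Psub ≤ (WithLp.sndL 2 ℂ ℓ² ℓ²).ker :=
  Submodule.topologicalClosure_span_le_ker (by rintro _ ⟨n, rfl⟩; rfl)

theorem snd_apply_eq_of_mem_Qsub {q : L2Sum} (hq : q ∈ Qsub) (n : ℕ) :
    q.snd n = 1 / ((n : ℂ) + 1) * q.fst n := by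
  let φ : L2Sum →L[ℂ] ℂ := (1 / ((n : ℂ) + 1)) • (lp.evalCLM ℂ _ 2 n).comp (WithLp.fstL 2 ℂ ℓ² ℓ²)
    - (lp.evalCLM ℂ _ 2 n).comp (WithLp.sndL 2 ℂ ℓ² ℓ²)
  have hφ : Qsub ≤ φ.ker := Submodule.topologicalClosure_span_le_ker <| by
    rintro _ ⟨m, rfl⟩
    rcases eq_or_ne m n with rfl | hmn
    · simp [φ, lp.evalCLM]
    · simp [φ, lp.evalCLM, Pi.single_eq_of_ne hmn.symm]
  have hφq : 1 / ((n : ℂ) + 1) * q.fst n - q.snd n = 0 := hφ hq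
  exact (sub_eq_zero.1 hφq).symm

theorem Psub_sup_Qsub_orthogonal : (Psub ⊔ Qsub)ᗮ = ⊥ := by
  refine (Submodule.eq_bot_iff _).2 fun v hv => ?_
  have hfst (n : ℕ) : v.fst n = 0 := by
    simpa [WithLp.prod_inner_apply, lp.inner_single_left] using
      Submodule.inner_right_of_mem_orthogonal
        (Submodule.mem_sup_left (toLp_single_zero_mem_Psub n)) hv
  have hsnd (n : ℕ) : v.snd n = 0 := by
    simpa [WithLp.prod_inner_apply, lp.inner_single_left, inner_smul_left, hfst,
      Nat.cast_add_one_ne_zero] using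
      Submodule.inner_right_of_mem_orthogonal
        (Submodule.mem_sup_right (toLp_single_smul_single_mem_Qsub n)) hv
  exact (WithLp.ext_iff 2).2 (Prod.ext (lp.ext (funext hfst)) (lp.ext (funext hsnd)))

theorem Psub_sup_Qsub_ne_top : Psub ⊔ Qsub ≠ ⊤ := by
  intro htop
  let y : ℓ² := ⟨_, memℓp_one_div_nat_add_one⟩
  obtain ⟨p, hp, q, hq, hpq⟩ :=
    Submodule.mem_sup.1 (htop ▸ Submodule.mem_top : WithLp.toLp 2 (0, y) ∈ Psub ⊔ Qsub)
  have hp_snd : p.snd = 0 := Psub_le_ker_snd hp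
  have hq_snd : q.snd = y := by
    simpa [hp_snd] using congrArg WithLp.snd hpq
  have hq_fst (n : ℕ) : q.fst n = 1 := by
    have h := snd_apply_eq_of_mem_Qsub hq n
    rw [hq_snd] at h
    exact (mul_eq_left₀ (one_div_ne_zero (Nat.cast_add_one_ne_zero n))).1 h.symm
  exact not_memℓp_const (by norm_num) one_ne_zero (funext hq_fst ▸ q.fst.2)

/-- With `𝒫` the closed span of `{eₙ ⊕ 0}` and `𝒬` the closed span of
`{eₙ ⊕ (1/(n+1)) eₙ}` in `ℓ² ⊕ ℓ²`, the sum `𝒫 + 𝒬` is dense but not closed. -/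
theorem sum_dense_not_closed :
    Dense ((Psub ⊔ Qsub : Submodule ℂ L2Sum) : Set L2Sum) ∧
    ¬ IsClosed ((Psub ⊔ Qsub : Submodule ℂ L2Sum) : Set L2Sum) := by
  have hdense : Dense ((Psub ⊔ Qsub : Submodule ℂ L2Sum) : Set L2Sum) := by
    rw [Submodule.dense_iff_topologicalClosure_eq_top, Submodule.topologicalClosure_eq_top_iff]
    exact Psub_sup_Qsub_orthogonal
  refine ⟨hdense, fun hclosed => Psub_sup_Qsub_ne_top ?_⟩
  rw [← Submodule.coe_eq_univ, ← hclosed.closure_eq, hdense.closure_eq]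
end

section
/- Let P and Q be orthogonal projections on a Hilbert space H such that ran(P) ∩ ran(Q)^⊥ = {0}, ran(P)^⊥ ∩ ran(Q) = {0}, and ran(P) + ran(Q)^⊥ is closed. Then the operator PQ, viewed as a map from ran(Q) to ran(P), is invertible (bounded with bounded inverse). -/
/-!
Let `U = ran P` and `V = ran Q`, both closed. The map in question is `T = P_U|_V : V → U`, and
it is the adjoint of `S = P_V|_U : U → V`. The kernel of `S` is `U ∩ Vᗮ = 0`. The closed
subspace `U + Vᗮ` has orthogonal complement `Uᗮ ∩ V = 0`, so it is all of `H`, and since `P_V`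
kills `Vᗮ`, `S` is onto. By the open mapping theorem `S` is an isomorphism, hence so is `T = S†`.
-/

open ContinuousLinearMap Submodule

namespace ContinuousLinearMap

variable {𝕜 E F : Type*} [RCLike 𝕜] [NormedAddCommGroup E] [InnerProductSpace 𝕜 E]
  [CompleteSpace E] [NormedAddCommGroup F] [InnerProductSpace 𝕜 F] [CompleteSpace F]

theorem bijective_adjoint {S : E →L[𝕜] F} (hS : Function.Bijective S) :
    Function.Bijective (adjoint S) := by
  let e := ContinuousLinearEquiv.ofBijective S (LinearMap.ker_eq_bot.mpr hS.1)
    (LinearMap.range_eq_top.mpr hS.2)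
  have h_left := congrArg adjoint e.coe_comp_coe_symm
  have h_right := congrArg adjoint e.coe_symm_comp_coe
  rw [adjoint_comp, adjoint_id] at h_left h_right
  exact Function.bijective_iff_has_inverse.mpr ⟨adjoint (e.symm : F →L[𝕜] E),
    DFunLike.congr_fun h_left, DFunLike.congr_fun h_right⟩

end ContinuousLinearMap

namespace Submodule

variable {𝕜 E : Type*} [RCLike 𝕜] [NormedAddCommGroup E] [InnerProductSpace 𝕜 E]
  {U V : Submodule 𝕜 E}

theorem adjoint_orthogonalProjectionOnto_comp_subtypeL [CompleteSpace E]
    [CompleteSpace U] [CompleteSpace V] :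
    adjoint (U.orthogonalProjectionOnto ∘L V.subtypeL) =
      V.orthogonalProjectionOnto ∘L U.subtypeL := by
  rw [adjoint_comp, adjoint_subtypeL, adjoint_orthogonalProjectionOnto]

theorem injective_orthogonalProjectionOnto_comp_subtypeL [U.HasOrthogonalProjection]
    (h : V ⊓ Uᗮ = ⊥) : Function.Injective (U.orthogonalProjectionOnto ∘L V.subtypeL) := by
  refine (injective_iff_map_eq_zero _).mpr fun v hv => ?_
  have hv' : (v : E) ∈ V ⊓ Uᗮ := ⟨v.2, orthogonalProjectionOnto_eq_zero_iff.mp hv⟩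
  rw [h] at hv'
  exact Subtype.ext hv'

theorem surjective_orthogonalProjectionOnto_comp_subtypeL [U.HasOrthogonalProjection]
    (h : V ⊔ Uᗮ = ⊤) : Function.Surjective (U.orthogonalProjectionOnto ∘L V.subtypeL) := by
  intro u
  obtain ⟨v, hv, w, hw, hvw⟩ := mem_sup.mp (h ▸ mem_top : (u : E) ∈ V ⊔ Uᗮ)
  refine ⟨⟨v, hv⟩, ?_⟩
  have := congrArg U.orthogonalProjectionOnto hvw
  rwa [map_add, orthogonalProjectionOnto_eq_zero_iff.mpr hw, add_zero,
    orthogonalProjectionOnto_mem_subspace_eq_self] at this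

theorem sup_orthogonal_eq_top [CompleteSpace E] [V.HasOrthogonalProjection]
    (hclosed : IsClosed ((U ⊔ Vᗮ : Submodule 𝕜 E) : Set E)) (h : Uᗮ ⊓ V = ⊥) :
    U ⊔ Vᗮ = ⊤ := by
  have := hclosed.completeSpace_coe
  rw [← orthogonal_eq_bot_iff, ← inf_orthogonal, orthogonal_orthogonal, h]

theorem bijective_orthogonalProjectionOnto_comp_subtypeL [CompleteSpace E] [CompleteSpace U]
    [CompleteSpace V] (h₁ : U ⊓ Vᗮ = ⊥) (h₂ : Uᗮ ⊓ V = ⊥)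
    (hclosed : IsClosed ((U ⊔ Vᗮ : Submodule 𝕜 E) : Set E)) :
    Function.Bijective (U.orthogonalProjectionOnto ∘L V.subtypeL) := by
  rw [← adjoint_orthogonalProjectionOnto_comp_subtypeL]
  exact bijective_adjoint ⟨injective_orthogonalProjectionOnto_comp_subtypeL h₁,
    surjective_orthogonalProjectionOnto_comp_subtypeL (sup_orthogonal_eq_top hclosed h₂)⟩

end Submodule

theorem PQ_invertible_between_ranges_general {H : Type*} [NormedAddCommGroup H]
    [InnerProductSpace ℂ H] [CompleteSpace H] (P Q : H →L[ℂ] H)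
    (hPsa : IsSelfAdjoint P) (hP2 : P * P = P)
    (hQ2 : Q * Q = Q)
    (h1 : LinearMap.range P.toLinearMap ⊓ (LinearMap.range Q.toLinearMap)ᗮ = ⊥)
    (h2 : (LinearMap.range P.toLinearMap)ᗮ ⊓ LinearMap.range Q.toLinearMap = ⊥)
    (hclosed : IsClosed ((LinearMap.range P.toLinearMap
        ⊔ (LinearMap.range Q.toLinearMap)ᗮ : Submodule ℂ H) : Set H)) :
    Function.Bijective
      (fun q : LinearMap.range Q.toLinearMap =>
        (⟨P q, LinearMap.mem_range_self P.toLinearMap (q : H)⟩ :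
          LinearMap.range P.toLinearMap)) := by
  have := (IsIdempotentElem.isClosed_range hP2).completeSpace_coe
  have := (IsIdempotentElem.isClosed_range hQ2).completeSpace_coe
  obtain ⟨_, hP⟩ := isStarProjection_iff_eq_starProjection_range.mp ⟨hP2, hPsa⟩
  convert bijective_orthogonalProjectionOnto_comp_subtypeL h1 h2 hclosed using 1
  funext q
  exact Subtype.ext (DFunLike.congr_fun hP (q : H))

/-- Let `P`, `Q` be orthogonal projections on a Hilbert space such that
`ran P ∩ (ran Q)ᗮ = {0}`, `(ran P)ᗮ ∩ ran Q = {0}`, and `ran P + (ran Q)ᗮ` is closed.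
Then `PQ`, viewed as the map `ran Q → ran P`, `q ↦ P q`, is invertible (bijective, hence
with bounded inverse by the closed graph theorem). -/
theorem PQ_invertible_between_ranges {H : Type*} [NormedAddCommGroup H]
    [InnerProductSpace ℂ H] [CompleteSpace H] (P Q : H →L[ℂ] H)
    (hPsa : IsSelfAdjoint P) (hP2 : P * P = P)
    (hQsa : IsSelfAdjoint Q) (hQ2 : Q * Q = Q)
    (h1 : LinearMap.range P.toLinearMap ⊓ (LinearMap.range Q.toLinearMap)ᗮ = ⊥)
    (h2 : (LinearMap.range P.toLinearMap)ᗮ ⊓ LinearMap.range Q.toLinearMap = ⊥)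
    (hclosed : IsClosed ((LinearMap.range P.toLinearMap
        ⊔ (LinearMap.range Q.toLinearMap)ᗮ : Submodule ℂ H) : Set H)) :
    Function.Bijective
      (fun q : LinearMap.range Q.toLinearMap =>
        (⟨P q, LinearMap.mem_range_self P.toLinearMap (q : H)⟩ :
          LinearMap.range P.toLinearMap)) :=
  PQ_invertible_between_ranges_general P Q hPsa hP2 hQ2 h1 h2 hclosed
end
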